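/- arXiv:0802.0532 — 3 statements merged into one kernel-verified Lean document; each statement's English description precedes it below -/
import Mathlib

section
/- Let A be a finite collection of covectors on ℂⁿ with nonzero multiplicities c_α such that the bilinear form G(u,v) = Σ_{α∈A} c_α α(u)α(v) is non-degenerate. If for every α ∈ A and every α-series Γ the identity Σ_{β∈Γ} c_β (α,β) α∧β = 0 holds (where (·,·) is the inner product induced by G on the dual space and ∧ denotes the wedge product of covectors), then for every α ∈ A and every two-dimensional plane π containing α, the vector Σ_{β∈A∩π} c_β (α,β) β is proportional to α. -/
open scoped BigOperators

noncomputable section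

abbrev V (n : ℕ) := Fin n → ℂ
abbrev D (n : ℕ) := Module.Dual ℂ (V n)

/-- Wedge of two covectors: `(α∧β)(a,b) = α(a)β(b) − α(b)β(a)`. -/
def wedge {n : ℕ} (α β : D n) (a b : V n) : ℂ := α a * β b - α b * β a

/-- `β` is parallel (collinear) to `α`. -/
def Parallel {n : ℕ} (α β : D n) : Prop := ∃ t : ℂ, β = t • α

/-- Two covectors belong to a common `α`-series: their difference or sum is an
integer multiple of `α`. -/
def SameSer {n : ℕ} (α γ₁ γ₂ : D n) : Prop :=
  ∃ m : ℤ, γ₁ - γ₂ = (m : ℂ) • α ∨ γ₁ + γ₂ = (m : ℂ) • α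

/-- `Γ` is a (maximal) `α`-series of the system `A`. -/
def IsSeries {n : ℕ} (A : Finset (D n)) (α : D n) (Γ : Finset (D n)) : Prop :=
  Γ ⊆ A ∧ (∀ β ∈ Γ, ¬ Parallel α β) ∧
    (∀ γ₁ ∈ Γ, ∀ γ₂ ∈ Γ, SameSer α γ₁ γ₂) ∧
    (∀ β ∈ A, ¬ Parallel α β → (∃ γ ∈ Γ, SameSer α β γ) → β ∈ Γ)

/-- The trigonometric ∨-system series conditions:
for every `α ∈ A` and every `α`-series `Γ`, `Σ_{β∈Γ} c_β (α,β) α∧β = 0`. -/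
def SeriesCond {n : ℕ} (A : Finset (D n)) (c : D n → ℂ) (ip : D n → D n → ℂ) : Prop :=
  ∀ α ∈ A, ∀ Γ : Finset (D n), IsSeries A α Γ →
    ∀ a b : V n, ∑ β ∈ Γ, c β * ip α β * wedge α β a b = 0

/-- The bilinear form `G(u,v) = Σ_{α∈A} c_α α(u) α(v)`. -/
def Gform {n : ℕ} (A : Finset (D n)) (c : D n → ℂ) (u v : V n) : ℂ :=
  ∑ α ∈ A, c α * α u * α v

/-- Non-degeneracy of a bilinear form on `ℂⁿ`. -/
def NonDeg {n : ℕ} (B : V n → V n → ℂ) : Prop :=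
  ∀ u : V n, (∀ v : V n, B u v = 0) → u = 0

/-- All covectors of `A` lie in an `n`-dimensional lattice. -/
def InLattice {n : ℕ} (A : Finset (D n)) : Prop :=
  ∃ f : Fin n → D n, LinearIndependent ℂ f ∧
    ∀ β ∈ A, ∃ m : Fin n → ℤ, β = ∑ i, (m i : ℂ) • f i

/-- The `i`-th coordinate covector. -/
def coD {n : ℕ} (i : Fin n) : D n := LinearMap.proj i

/-- Partial derivative in the `i`-th coordinate direction. -/
def pd {n : ℕ} (i : Fin n) (f : V n → ℂ) (x : V n) : ℂ := fderiv ℂ f x (Pi.single i 1)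

/-- Irreducibility: `A` does not split as a direct sum of two lower-dimensional systems. -/
def Irred {n : ℕ} (A : Finset (D n)) : Prop :=
  ¬ ∃ U₁ U₂ : Submodule ℂ (D n), U₁ ⊓ U₂ = ⊥ ∧ (∀ β ∈ A, β ∈ U₁ ∨ β ∈ U₂) ∧
    (∃ β ∈ A, β ∉ U₁) ∧ (∃ β ∈ A, β ∉ U₂)

/-!
The non-parallel covectors of `A ∩ π` split into `α`-series, since two members of one series
differ, up to sign, by a multiple of `α ∈ π`; the parallel ones have `α ∧ β = 0`. Hence the series
conditions give `α ∧ Σ_{β∈A∩π} c_β (α,β) β = 0`, and a covector whose wedge with `α ≠ 0` vanishes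
is a multiple of `α`.
-/

open Finset

namespace SameSer

variable {n : ℕ} {α γ₁ γ₂ γ₃ : D n}

theorem refl (α γ : D n) : SameSer α γ γ := ⟨0, Or.inl (by simp)⟩

theorem symm (h : SameSer α γ₁ γ₂) : SameSer α γ₂ γ₁ := by
  obtain ⟨m, h | h⟩ := h
  · exact ⟨-m, Or.inl (by push_cast; rw [neg_smul, ← h]; abel)⟩
  · exact ⟨m, Or.inr (by rw [← h]; abel)⟩

theorem trans (h₁₂ : SameSer α γ₁ γ₂) (h₂₃ : SameSer α γ₂ γ₃) : SameSer α γ₁ γ₃ := by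
  obtain ⟨m, h₁₂ | h₁₂⟩ := h₁₂ <;> obtain ⟨k, h₂₃ | h₂₃⟩ := h₂₃
  · exact ⟨m + k, Or.inl (by push_cast; rw [add_smul, ← h₁₂, ← h₂₃]; abel)⟩
  · exact ⟨m + k, Or.inr (by push_cast; rw [add_smul, ← h₁₂, ← h₂₃]; abel)⟩
  · exact ⟨m - k, Or.inr (by push_cast; rw [sub_smul, ← h₁₂, ← h₂₃]; abel)⟩
  · exact ⟨m - k, Or.inl (by push_cast; rw [sub_smul, ← h₁₂, ← h₂₃]; abel)⟩

theorem equivalence (α : D n) : Equivalence (SameSer α) := ⟨refl α, symm, trans⟩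

theorem mem_submodule {π : Submodule ℂ (D n)} (hα : α ∈ π) (h : SameSer α γ₁ γ₂)
    (h₂ : γ₂ ∈ π) : γ₁ ∈ π := by
  obtain ⟨m, h | h⟩ := h
  · rw [sub_eq_iff_eq_add.mp h]
    exact add_mem (π.smul_mem _ hα) h₂
  · rw [eq_sub_of_add_eq h]
    exact sub_mem (π.smul_mem _ hα) h₂

end SameSer

def seriesSetoid {n : ℕ} (α : D n) : Setoid (D n) := ⟨SameSer α, SameSer.equivalence α⟩

open Classical in
theorem isSeries_filter_sameSer {n : ℕ} (A : Finset (D n)) (α β : D n) :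
    IsSeries A α {δ ∈ A | ¬ Parallel α δ ∧ SameSer α δ β} := by
  simp only [IsSeries, mem_filter]
  refine ⟨filter_subset _ _, fun δ hδ => hδ.2.1, fun γ₁ h₁ γ₂ h₂ => ?_, ?_⟩
  · exact h₁.2.2.trans h₂.2.2.symm
  · rintro δ hδA hδ ⟨γ, hγ, hδγ⟩
    exact ⟨hδA, hδ, hδγ.trans hγ.2.2⟩

open Classical in
theorem sum_nonparallel_mem_eq_zero {n : ℕ} {M : Type*} [AddCommMonoid M]
    (A : Finset (D n)) {α : D n} {π : Submodule ℂ (D n)} (hα : α ∈ π) (f : D n → M)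
    (hf : ∀ Γ, IsSeries A α Γ → ∑ β ∈ Γ, f β = 0) :
    ∑ β ∈ A with β ∈ π ∧ ¬ Parallel α β, f β = 0 := by
  refine sum_cancels_of_partition_cancels (seriesSetoid α) fun β hβ => ?_
  have hβπ : β ∈ π := (mem_filter.mp hβ).2.1
  convert hf _ (isSeries_filter_sameSer A α β) using 1
  refine sum_congr (ext fun δ => ?_) fun _ _ => rfl
  simp only [mem_filter]
  constructor
  · rintro ⟨⟨hδA, -, hδ⟩, hδβ⟩
    exact ⟨hδA, hδ, hδβ⟩
  · rintro ⟨hδA, hδ, hδβ⟩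
    exact ⟨⟨hδA, SameSer.mem_submodule hα hδβ hβπ, hδ⟩, hδβ⟩

theorem wedge_eq_zero_of_parallel {n : ℕ} {α β : D n} (h : Parallel α β) (a b : V n) :
    wedge α β a b = 0 := by
  obtain ⟨t, rfl⟩ := h
  simp only [wedge, LinearMap.smul_apply, smul_eq_mul]
  ring

theorem wedge_sum_smul {n : ℕ} {ι : Type*} (s : Finset ι) (w : ι → ℂ) (β : ι → D n)
    (α : D n) (a b : V n) :
    wedge α (∑ i ∈ s, w i • β i) a b = ∑ i ∈ s, w i * wedge α (β i) a b := by
  simp only [wedge, LinearMap.coe_sum, Finset.sum_apply, LinearMap.smul_apply, smul_eq_mul,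
    mul_sum, ← sum_sub_distrib]
  exact sum_congr rfl fun _ _ => by ring

theorem exists_eq_smul_of_wedge_eq_zero {n : ℕ} {α S : D n} (hα : α ≠ 0)
    (h : ∀ a b, wedge α S a b = 0) : ∃ t : ℂ, S = t • α := by
  obtain ⟨a, ha⟩ : ∃ a, α a ≠ 0 := by
    by_contra! h0
    exact hα (LinearMap.ext h0)
  refine ⟨S a / α a, LinearMap.ext fun b => ?_⟩
  have hab : α a * S b - α b * S a = 0 := h a b
  simp only [LinearMap.smul_apply, smul_eq_mul]
  field_simp
  linear_combination hab

open Classical in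
theorem SeriesCond.sum_wedge_mem_eq_zero {n : ℕ} {A : Finset (D n)} {c : D n → ℂ}
    {ip : D n → D n → ℂ} (hser : SeriesCond A c ip) {α : D n} (hαA : α ∈ A)
    {π : Submodule ℂ (D n)} (hα : α ∈ π) (a b : V n) :
    ∑ β ∈ A with β ∈ π, c β * ip α β * wedge α β a b = 0 := by
  rw [← sum_filter_add_sum_filter_not _ (Parallel α), filter_filter, filter_filter,
    sum_eq_zero fun β hβ => by rw [wedge_eq_zero_of_parallel (mem_filter.mp hβ).2.2, mul_zero],
    zero_add]
  exact sum_nonparallel_mem_eq_zero A hα _ fun Γ hΓ => hser α hαA Γ hΓ a b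

open Classical in
theorem trig_vee_gives_rational_vee_general (n : ℕ) (A : Finset (D n)) (c : D n → ℂ)
    (vee : D n → V n)
    (hser : SeriesCond A c (fun ξ η => ξ (vee η))) :
    ∀ α ∈ A, ∀ π : Submodule ℂ (D n), Module.finrank ℂ π = 2 → α ∈ π →
      ∃ t : ℂ, (∑ β ∈ A, (if β ∈ π then c β * α (vee β) else 0) • β) = t • α := by
  intro α hαA π _ hα
  by_cases hα0 : α = 0
  · exact ⟨0, by simp [hα0]⟩
  refine exists_eq_smul_of_wedge_eq_zero hα0 fun a b => ?_
  rw [wedge_sum_smul]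
  simp only [ite_mul, zero_mul]
  rw [← sum_filter]
  exact hser.sum_wedge_mem_eq_zero hαA hα a b

open Classical in
/-- Proposition 1: a trigonometric ∨-system yields, in every
two-dimensional plane through a covector `α`, the rational ∨-condition:
`Σ_{β∈A∩π} c_β (α,β) β` is proportional to `α`. -/
theorem trig_vee_gives_rational_vee (n : ℕ) (A : Finset (D n)) (c : D n → ℂ)
    (hc : ∀ α ∈ A, c α ≠ 0)
    (hnd : NonDeg (Gform A c))
    (vee : D n → V n) (hvee : ∀ ξ : D n, ∀ v : V n, Gform A c (vee ξ) v = ξ v)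
    (hser : SeriesCond A c (fun ξ η => ξ (vee η))) :
    ∀ α ∈ A, ∀ π : Submodule ℂ (D n), Module.finrank ℂ π = 2 → α ∈ π →
      ∃ t : ℂ, (∑ β ∈ A, (if β ∈ π then c β * α (vee β) else 0) • β) = t • α :=
  trig_vee_gives_rational_vee_general n A c vee hser
end
end

section
/- Let A consist of two non-collinear covectors α, β on ℂ² with nonzero multiplicities c_α, c_β, and suppose the form G = c_α α⊗α + c_β β⊗β is non-degenerate. Then (α,β) = 0 with respect to the inner product on the dual space induced by G, and consequently A satisfies all trigonometric ∨-system series conditions. -/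
/-! Writing `G(w, ·) = β` out gives `c_α α(w) α + (c_β β(w) - 1) β = 0`, so linear
independence of `α, β` forces `c_α α(w) = 0`, i.e. `(α, β) = α(β^∨) = 0`; symmetrically
`(β, α) = 0`. Every term of a series sum pairs a covector of `A` with a non-parallel one,
i.e. `α` with `β` or `β` with `α`, so all series sums vanish. -/

open scoped BigOperators

noncomputable section

namespace TwoCovectors

variable {n : ℕ}

lemma parallel_self (α : D n) : Parallel α α := ⟨1, (one_smul ℂ α).symm⟩

lemma seriesCond_of_forall_not_parallel {A : Finset (D n)} {c : D n → ℂ} {ip : D n → D n → ℂ}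
    (h : ∀ ξ ∈ A, ∀ η ∈ A, ¬ Parallel ξ η → ip ξ η = 0) : SeriesCond A c ip := by
  intro ξ hξ Γ hΓ a b
  refine Finset.sum_eq_zero fun η hη => ?_
  rw [h ξ hξ η (hΓ.1 hη) (hΓ.2.1 η hη), mul_zero, zero_mul]

lemma gform_pair [DecidableEq (D n)] {α β : D n} (hne : α ≠ β) (c : D n → ℂ) (u v : V n) :
    Gform {α, β} c u v = c α * α u * α v + c β * β u * β v := by
  rw [Gform, Finset.sum_pair hne]

lemma apply_eq_zero_of_gform_pair_eq [DecidableEq (D n)] {α β : D n}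
    (hind : LinearIndependent ℂ ![α, β]) {c : D n → ℂ} (hcα : c α ≠ 0) {w : V n}
    (hw : ∀ v, Gform {α, β} c w v = β v) :
    α w = 0 := by
  have hne : α ≠ β := by simpa using hind.injective.ne (show (0 : Fin 2) ≠ 1 by decide)
  have hrel : (c α * α w) • α + (c β * β w - 1) • β = 0 := by
    refine LinearMap.ext fun v => ?_
    have hv := hw v
    rw [gform_pair hne] at hv
    simp only [LinearMap.add_apply, LinearMap.smul_apply, smul_eq_mul, LinearMap.zero_apply]
    linear_combination hv
  exact (mul_eq_zero.mp (LinearIndependent.pair_iff.mp hind _ _ hrel).1).resolve_left hcα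

end TwoCovectors

open TwoCovectors in
theorem two_covectors_general (α β : D 2) (hind : LinearIndependent ℂ ![α, β])
    (cα cβ : ℂ) (hcα : cα ≠ 0) (hcβ : cβ ≠ 0)
    (A : Finset (D 2)) (hA : ∀ ξ, ξ ∈ A ↔ ξ = α ∨ ξ = β)
    (c : D 2 → ℂ) (hc1 : c α = cα) (hc2 : c β = cβ)
    (vee : D 2 → V 2) (hvee : ∀ ξ : D 2, ∀ v : V 2, Gform A c (vee ξ) v = ξ v) :
    α (vee β) = 0 ∧ SeriesCond A c (fun ξ η => ξ (vee η)) := by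
  classical
  obtain rfl : A = {α, β} := Finset.ext fun ξ => by simp [hA]
  subst hc1 hc2
  have hαβ : α (vee β) = 0 := apply_eq_zero_of_gform_pair_eq hind hcα (hvee β)
  have hβα : β (vee α) = 0 :=
    apply_eq_zero_of_gform_pair_eq (LinearIndependent.pair_symm_iff.mp hind) hcβ
      (by rw [Finset.pair_comm]; exact hvee α)
  refine ⟨hαβ, seriesCond_of_forall_not_parallel ?_⟩
  simp only [Finset.mem_insert, Finset.mem_singleton]
  rintro ξ (rfl | rfl) η (rfl | rfl) hnp
  exacts [(hnp (parallel_self _)).elim, hαβ, hβα, (hnp (parallel_self _)).elim]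

/-- a system of two non-collinear covectors on ℂ² with non-degenerate
form satisfies `(α,β)=0` and hence all trigonometric ∨-system series conditions. -/
theorem two_covectors (α β : D 2) (hind : LinearIndependent ℂ ![α, β])
    (cα cβ : ℂ) (hcα : cα ≠ 0) (hcβ : cβ ≠ 0)
    (A : Finset (D 2)) (hA : ∀ ξ, ξ ∈ A ↔ ξ = α ∨ ξ = β)
    (c : D 2 → ℂ) (hc1 : c α = cα) (hc2 : c β = cβ)
    (hnd : NonDeg (Gform A c))
    (vee : D 2 → V 2) (hvee : ∀ ξ : D 2, ∀ v : V 2, Gform A c (vee ξ) v = ξ v) :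
    α (vee β) = 0 ∧ SeriesCond A c (fun ξ η => ξ (vee η)) :=
  two_covectors_general α β hind cα cβ hcα hcβ A hA c hc1 hc2 vee hvee
end
end

section
/- Let A₁ ⊂ V₁*, A₂ ⊂ V₂* be trigonometric ∨-systems with non-degenerate ∨-forms (·,·)₁ and (·,·)₂. Suppose the direct sum system A₁ ⊕ A₂ on V₁ ⊕ V₂ satisfies: for all a,b,c,d ∈ V₁⊕V₂, Σ_{α,β ∈ (A₁⊕A₂)₊} (λ²/4·(α,β) − 1) c_α c_β B_{α,β}(a,b) B_{α,β}(c,d) = 0, where B_{α,β}(a,b) = α(a)β(b) − α(b)β(a). Then taking a,c ∈ V₁ and b,d ∈ V₂ yields (a,c)₁ (b,d)₂ = 0; hence if dim V₁ ≥ 1 and dim V₂ ≥ 1 with non-degenerate forms, the condition fails. -/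
/-! At `a = (a₁, 0)`, `b = (0, b₂)`, `u = (u₁, 0)`, `v = (0, v₂)` a wedge of two covectors from the
same summand vanishes, while covectors from different summands are orthogonal, so each surviving
term carries the factor `-1`. The WDVV sum therefore collapses to `-2 (a₁,u₁)₁ (b₂,v₂)₂`, and
non-degeneracy makes both factors nonzero for suitable vectors. -/

open scoped BigOperators

noncomputable section

theorem NonDeg.exists_ne_zero {n : ℕ} {B : V n → V n → ℂ} (hB : NonDeg B) (hn : 0 < n) :
    ∃ u v, B u v ≠ 0 := by
  have : Nonempty (Fin n) := ⟨⟨0, hn⟩⟩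
  obtain ⟨u, hu⟩ := exists_ne (0 : V n)
  by_contra! h
  exact hu (hB u (h u))

section DirectSum

variable {R M₁ M₂ : Type*} [CommRing R] [AddCommGroup M₁] [Module R M₁]
  [AddCommGroup M₂] [Module R M₂]

def IsDirectSumSystem (A₁ : Finset (Module.Dual R M₁)) (A₂ : Finset (Module.Dual R M₂))
    (A : Finset (Module.Dual R (M₁ × M₂))) : Prop :=
  ∀ ξ, ξ ∈ A ↔ ((∃ α ∈ A₁, ξ = α.comp (LinearMap.fst R M₁ M₂)) ∨
    (∃ β ∈ A₂, ξ = β.comp (LinearMap.snd R M₁ M₂)))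

variable {A₁ : Finset (Module.Dual R M₁)} {A₂ : Finset (Module.Dual R M₂)}
  {A : Finset (Module.Dual R (M₁ × M₂))}

namespace IsDirectSumSystem

theorem sum_eq_sum_fst {S : Type*} [AddCommMonoid S] (hA : IsDirectSumSystem A₁ A₂ A)
    {f : Module.Dual R (M₁ × M₂) → S} (hf : ∀ β ∈ A₂, f (β.comp (LinearMap.snd R M₁ M₂)) = 0) :
    ∑ ξ ∈ A, f ξ = ∑ α ∈ A₁, f (α.comp (LinearMap.fst R M₁ M₂)) := by
  classical
  have hinj : Set.InjOn (fun α : Module.Dual R M₁ => α.comp (LinearMap.fst R M₁ M₂)) A₁ :=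
    fun _ _ _ _ h => (LinearMap.cancel_right LinearMap.fst_surjective).1 h
  rw [← Finset.sum_image hinj]
  refine (Finset.sum_subset (fun ξ hξ => ?_) fun ξ hξ hξ₁ => ?_).symm
  · obtain ⟨α, hα, rfl⟩ := Finset.mem_image.1 hξ
    exact (hA _).2 (.inl ⟨α, hα, rfl⟩)
  · rcases (hA ξ).1 hξ with ⟨α, hα, rfl⟩ | ⟨β, hβ, rfl⟩
    · exact absurd (Finset.mem_image_of_mem _ hα) hξ₁
    · exact hf β hβ

theorem sum_eq_sum_snd {S : Type*} [AddCommMonoid S] (hA : IsDirectSumSystem A₁ A₂ A)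
    {f : Module.Dual R (M₁ × M₂) → S} (hf : ∀ α ∈ A₁, f (α.comp (LinearMap.fst R M₁ M₂)) = 0) :
    ∑ ξ ∈ A, f ξ = ∑ β ∈ A₂, f (β.comp (LinearMap.snd R M₁ M₂)) := by
  classical
  have hinj : Set.InjOn (fun β : Module.Dual R M₂ => β.comp (LinearMap.snd R M₁ M₂)) A₂ :=
    fun _ _ _ _ h => (LinearMap.cancel_right LinearMap.snd_surjective).1 h
  rw [← Finset.sum_image hinj]
  refine (Finset.sum_subset (fun ξ hξ => ?_) fun ξ hξ hξ₂ => ?_).symm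
  · obtain ⟨β, hβ, rfl⟩ := Finset.mem_image.1 hξ
    exact (hA _).2 (.inr ⟨β, hβ, rfl⟩)
  · rcases (hA ξ).1 hξ with ⟨α, hα, rfl⟩ | ⟨β, hβ, rfl⟩
    · exact hf α hα
    · exact absurd (Finset.mem_image_of_mem _ hβ) hξ₂

theorem form_inl (hA : IsDirectSumSystem A₁ A₂ A) {c : Module.Dual R (M₁ × M₂) → R}
    {c₁ : Module.Dual R M₁ → R} (hc : ∀ α ∈ A₁, c (α.comp (LinearMap.fst R M₁ M₂)) = c₁ α)
    (a u : M₁) :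
    ∑ ξ ∈ A, c ξ * ξ (a, 0) * ξ (u, 0) = ∑ α ∈ A₁, c₁ α * α a * α u := by
  rw [hA.sum_eq_sum_fst (by simp)]
  exact Finset.sum_congr rfl fun α hα => by simp [hc α hα]

theorem form_inr (hA : IsDirectSumSystem A₁ A₂ A) {c : Module.Dual R (M₁ × M₂) → R}
    {c₂ : Module.Dual R M₂ → R} (hc : ∀ β ∈ A₂, c (β.comp (LinearMap.snd R M₁ M₂)) = c₂ β)
    (b v : M₂) :
    ∑ ξ ∈ A, c ξ * ξ (0, b) * ξ (0, v) = ∑ β ∈ A₂, c₂ β * β b * β v := by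
  rw [hA.sum_eq_sum_snd (by simp)]
  exact Finset.sum_congr rfl fun β hβ => by simp [hc β hβ]

theorem wdvv_sum_inl_inr (hA : IsDirectSumSystem A₁ A₂ A) {c : Module.Dual R (M₁ × M₂) → R}
    {ip : Module.Dual R (M₁ × M₂) → Module.Dual R (M₁ × M₂) → R}
    (hcross : ∀ α ∈ A₁, ∀ β ∈ A₂,
      ip (α.comp (LinearMap.fst R M₁ M₂)) (β.comp (LinearMap.snd R M₁ M₂)) = 0 ∧
      ip (β.comp (LinearMap.snd R M₁ M₂)) (α.comp (LinearMap.fst R M₁ M₂)) = 0)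
    (k : R) (a u : M₁) (b v : M₂) :
    ∑ ξ ∈ A, ∑ η ∈ A, (k * ip ξ η - 1) * c ξ * c η *
        (ξ (a, 0) * η (0, b) - ξ (0, b) * η (a, 0)) * (ξ (u, 0) * η (0, v) - ξ (0, v) * η (u, 0)) =
      -2 * (∑ ξ ∈ A, c ξ * ξ (a, 0) * ξ (u, 0)) * (∑ ξ ∈ A, c ξ * ξ (0, b) * ξ (0, v)) := by
  set x := fun ξ : Module.Dual R (M₁ × M₂) => c ξ * ξ (a, 0) * ξ (u, 0)
  set y := fun ξ : Module.Dual R (M₁ × M₂) => c ξ * ξ (0, b) * ξ (0, v)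
  -- same-side pairs vanish on both sides of this identity, mixed pairs have `ip = 0`
  have hterm : ∀ ξ ∈ A, ∀ η ∈ A, (k * ip ξ η - 1) * c ξ * c η *
      (ξ (a, 0) * η (0, b) - ξ (0, b) * η (a, 0)) * (ξ (u, 0) * η (0, v) - ξ (0, v) * η (u, 0)) =
        -(x ξ * y η) - y ξ * x η := by
    intro ξ hξ η hη
    rcases (hA ξ).1 hξ with ⟨α, hα, rfl⟩ | ⟨α, hα, rfl⟩ <;>
      rcases (hA η).1 hη with ⟨β, hβ, rfl⟩ | ⟨β, hβ, rfl⟩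
    · simp [x, y]
    · simp only [x, y, (hcross α hα β hβ).1, LinearMap.comp_apply, LinearMap.fst_apply,
        LinearMap.snd_apply, map_zero]
      ring
    · simp only [x, y, (hcross β hβ α hα).2, LinearMap.comp_apply, LinearMap.fst_apply,
        LinearMap.snd_apply, map_zero]
      ring
    · simp [x, y]
  rw [Finset.sum_congr rfl fun ξ hξ => Finset.sum_congr rfl (hterm ξ hξ)]
  simp only [Finset.sum_sub_distrib, Finset.sum_neg_distrib, ← Finset.mul_sum, ← Finset.sum_mul]
  ring

end IsDirectSumSystem

end DirectSum

theorem direct_sum_fails_general (n m : ℕ) (hn : 0 < n) (hm : 0 < m)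
    (A₁ : Finset (D n)) (A₂ : Finset (D m)) (c₁ : D n → ℂ) (c₂ : D m → ℂ)
    (hnd1 : NonDeg (Gform A₁ c₁)) (hnd2 : NonDeg (Gform A₂ c₂))
    (A' : Finset (Module.Dual ℂ (V n × V m))) (c' : Module.Dual ℂ (V n × V m) → ℂ)
    (ip' : Module.Dual ℂ (V n × V m) → Module.Dual ℂ (V n × V m) → ℂ)
    (hA' : ∀ ξ, ξ ∈ A' ↔ ((∃ α ∈ A₁, ξ = α.comp (LinearMap.fst ℂ (V n) (V m))) ∨
      (∃ β ∈ A₂, ξ = β.comp (LinearMap.snd ℂ (V n) (V m)))))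
    (hc'1 : ∀ α ∈ A₁, c' (α.comp (LinearMap.fst ℂ (V n) (V m))) = c₁ α)
    (hc'2 : ∀ β ∈ A₂, c' (β.comp (LinearMap.snd ℂ (V n) (V m))) = c₂ β)
    (hcross : ∀ α ∈ A₁, ∀ β ∈ A₂,
      ip' (α.comp (LinearMap.fst ℂ (V n) (V m))) (β.comp (LinearMap.snd ℂ (V n) (V m))) = 0 ∧
      ip' (β.comp (LinearMap.snd ℂ (V n) (V m))) (α.comp (LinearMap.fst ℂ (V n) (V m))) = 0)
    (lam : ℂ)
    (hwdvv : ∀ a b u v : V n × V m,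
      ∑ α ∈ A', ∑ β ∈ A', (lam ^ 2 / 4 * ip' α β - 1) * c' α * c' β *
        (α a * β b - α b * β a) * (α u * β v - α v * β u) = 0) :
    (∀ a u : V n, ∀ b v : V m, Gform A₁ c₁ a u * Gform A₂ c₂ b v = 0) ∧ False := by
  have hA : IsDirectSumSystem A₁ A₂ A' := hA'
  have hprod : ∀ a u : V n, ∀ b v : V m, Gform A₁ c₁ a u * Gform A₂ c₂ b v = 0 := by
    intro a u b v
    have h := hwdvv (a, 0) (0, b) (u, 0) (0, v)
    rw [hA.wdvv_sum_inl_inr hcross, hA.form_inl hc'1, hA.form_inr hc'2] at h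
    unfold Gform
    linear_combination -h / 2
  obtain ⟨a, u, hau⟩ := hnd1.exists_ne_zero hn
  obtain ⟨b, v, hbv⟩ := hnd2.exists_ne_zero hm
  exact ⟨hprod, mul_ne_zero hau hbv (hprod a u b v)⟩

/-- Remark 1: a direct sum of two trigonometric ∨-systems with
non-degenerate ∨-forms cannot satisfy the second WDVV condition: the condition forces
`(a,c)₁ (b,d)₂ = 0` for all vectors, contradicting non-degeneracy. -/
theorem direct_sum_fails (n m : ℕ) (hn : 0 < n) (hm : 0 < m)
    (A₁ : Finset (D n)) (A₂ : Finset (D m)) (c₁ : D n → ℂ) (c₂ : D m → ℂ)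
    (vee₁ : D n → V n) (hvee₁ : ∀ ξ : D n, ∀ v : V n, Gform A₁ c₁ (vee₁ ξ) v = ξ v)
    (vee₂ : D m → V m) (hvee₂ : ∀ ξ : D m, ∀ v : V m, Gform A₂ c₂ (vee₂ ξ) v = ξ v)
    (hser₁ : SeriesCond A₁ c₁ (fun ξ η => ξ (vee₁ η)))
    (hser₂ : SeriesCond A₂ c₂ (fun ξ η => ξ (vee₂ η)))
    (hnd1 : NonDeg (Gform A₁ c₁)) (hnd2 : NonDeg (Gform A₂ c₂))
    (A' : Finset (Module.Dual ℂ (V n × V m))) (c' : Module.Dual ℂ (V n × V m) → ℂ)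
    (ip' : Module.Dual ℂ (V n × V m) → Module.Dual ℂ (V n × V m) → ℂ)
    (hA' : ∀ ξ, ξ ∈ A' ↔ ((∃ α ∈ A₁, ξ = α.comp (LinearMap.fst ℂ (V n) (V m))) ∨
      (∃ β ∈ A₂, ξ = β.comp (LinearMap.snd ℂ (V n) (V m)))))
    (hc'1 : ∀ α ∈ A₁, c' (α.comp (LinearMap.fst ℂ (V n) (V m))) = c₁ α)
    (hc'2 : ∀ β ∈ A₂, c' (β.comp (LinearMap.snd ℂ (V n) (V m))) = c₂ β)
    (hip11 : ∀ α ∈ A₁, ∀ β ∈ A₁, ip' (α.comp (LinearMap.fst ℂ (V n) (V m)))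
      (β.comp (LinearMap.fst ℂ (V n) (V m))) = α (vee₁ β))
    (hip22 : ∀ α ∈ A₂, ∀ β ∈ A₂, ip' (α.comp (LinearMap.snd ℂ (V n) (V m)))
      (β.comp (LinearMap.snd ℂ (V n) (V m))) = α (vee₂ β))
    (hcross : ∀ α ∈ A₁, ∀ β ∈ A₂,
      ip' (α.comp (LinearMap.fst ℂ (V n) (V m))) (β.comp (LinearMap.snd ℂ (V n) (V m))) = 0 ∧
      ip' (β.comp (LinearMap.snd ℂ (V n) (V m))) (α.comp (LinearMap.fst ℂ (V n) (V m))) = 0)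
    (lam : ℂ)
    (hwdvv : ∀ a b u v : V n × V m,
      ∑ α ∈ A', ∑ β ∈ A', (lam ^ 2 / 4 * ip' α β - 1) * c' α * c' β *
        (α a * β b - α b * β a) * (α u * β v - α v * β u) = 0) :
    (∀ a u : V n, ∀ b v : V m, Gform A₁ c₁ a u * Gform A₂ c₂ b v = 0) ∧ False :=
  direct_sum_fails_general n m hn hm A₁ A₂ c₁ c₂ hnd1 hnd2 A' c' ip' hA' hc'1 hc'2 hcross lam hwdvv
end
end
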